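/- arXiv:1402.0643 — 2 statements merged into one kernel-verified Lean document; each statement's English description precedes it below -/
import Mathlib

section
/- Let K be a field, Q a polynomial in K[X, Y_1, ..., Y_s] with Q = Σ_j Q_j Y^j (coefficients in K[X]), and suppose Q(0, 0, ..., 0) = 0 with multiplicity at least m, meaning Q has only monomials of total degree at least m. Then for every multi-index i with |i| < m and every tuple R = (R_1,...,R_s) of polynomials in K[X] each divisible by X, the polynomial X^{m-|i|} divides Q^{[i]}(X, R), where Q^{[i]} is the order-i Hasse derivative with respect to Y. -/
/-!
Expand `Q^{[i]}(X, R) = Σ_{j ≥ i} binom(j,i) Q_j(X) R^{j-i}`. The vanishing hypothesis says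
exactly that `X^{m-|j|}` divides `Q_j`, and `X^{|j|-|i|}` divides `R^{j-i}` because `X` divides
every `R_k`; since `m - |i| ≤ (m - |j|) + (|j| - |i|)`, every summand is divisible by `X^{m-|i|}`.
-/

/-- The order-`i` Hasse derivative with respect to the variables `Y_1,...,Y_s`
of `Q = Σ_j Q_j(X) Y^j`, namely `Σ_{j ≥ i} binom(j,i) Q_j(X) Y^{j-i}`. -/
noncomputable def mvHasseDeriv {R : Type*} [CommSemiring R] {σ : Type*} (i : σ →₀ ℕ)
    (P : MvPolynomial σ R) : MvPolynomial σ R :=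
  (AddMonoidAlgebra.coeff P).sum fun j c =>
    if i ≤ j then
      (∏ k ∈ i.support, Nat.choose (j k) (i k)) • MvPolynomial.monomial (j - i) c
    else 0

open Finsupp Polynomial

theorem Finsupp.pow_degree_dvd_prod_pow {M σ : Type*} [CommMonoid M] {a : M} {f : σ → M}
    (hf : ∀ k, a ∣ f k) (d : σ →₀ ℕ) : a ^ d.degree ∣ d.prod fun k e => f k ^ e := by
  rw [degree_apply, Finsupp.prod, ← Finset.prod_pow_eq_pow_sum]
  exact Finset.prod_dvd_prod_of_dvd _ _ fun k _ => pow_dvd_pow_of_dvd (hf k) _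

theorem dvd_eval_mvHasseDeriv {R σ : Type*} [CommSemiring R] (i : σ →₀ ℕ)
    (P : MvPolynomial σ R) (f : σ → R) {b : R}
    (h : ∀ j, i ≤ j → b ∣ MvPolynomial.coeff j P * (j - i).prod fun k e => f k ^ e) :
    b ∣ MvPolynomial.eval f (mvHasseDeriv i P) := by
  rw [mvHasseDeriv, map_finsuppSum]
  refine Finset.dvd_sum fun j _ => ?_
  dsimp only
  split_ifs with hij
  · rw [map_nsmul, MvPolynomial.eval_monomial]
    exact dvd_nsmul_of_dvd _ (h j hij)
  · rw [map_zero]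
    exact dvd_zero b

/-- If `Q(0,...,0) = 0` with multiplicity at least `m` (that is, `Q` has only
monomials of total degree at least `m`), then for every multi-index `i` with
`|i| < m` and every tuple `R` of polynomials each divisible by `X`,
`X^{m-|i|}` divides `Q^{[i]}(X, R)`. -/
theorem hasse_divisibility_at_origin {K : Type*} [Field K] {s : ℕ}
    (Q : MvPolynomial (Fin s) (Polynomial K)) (m : ℕ)
    (hQ : ∀ (j : Fin s →₀ ℕ) (h : ℕ), h + (j.sum fun _ e => e) < m →
      Polynomial.coeff (MvPolynomial.coeff j Q) h = 0) :
    ∀ i : Fin s →₀ ℕ, (i.sum fun _ e => e) < m →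
      ∀ R : Fin s → Polynomial K, (∀ k, Polynomial.X ∣ R k) →
        (Polynomial.X : Polynomial K) ^ (m - (i.sum fun _ e => e)) ∣
          MvPolynomial.eval R (mvHasseDeriv i Q) := by
  intro i _ R hR
  have hcoeff (j : Fin s →₀ ℕ) : (X : K[X]) ^ (m - j.degree) ∣ MvPolynomial.coeff j Q :=
    X_pow_dvd_iff.2 fun h hh => hQ j h (by change h + j.degree < m; omega)
  refine dvd_eval_mvHasseDeriv i Q R fun j hij => ?_
  have hdeg : (j - i).degree + i.degree = j.degree := by
    rw [← map_add, tsub_add_cancel_of_le hij]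
  calc (X : K[X]) ^ (m - i.degree) ∣ X ^ (m - j.degree + (j - i).degree) :=
        pow_dvd_pow _ (by omega)
    _ ∣ _ := by
        rw [pow_add]
        exact mul_dvd_mul (hcoeff j) (pow_degree_dvd_prod_pow hR _)
end

section
/- Let K be a field, x_1, ..., x_n pairwise distinct elements of K, m_1, ..., m_n positive integers, and y_{i,j} ∈ K for 1 ≤ i ≤ n, 1 ≤ j ≤ s. Let R_1,...,R_s ∈ K[X] satisfy R_j(x_i) = y_{i,j} for all i, j, and let m = max_i m_i. Then a polynomial Q ∈ K[X, Y_1, ..., Y_s] vanishes at each point (x_i, y_{i,1},...,y_{i,s}) with multiplicity at least m_i (for all i = 1,...,n) if and only if for every multi-index i ∈ ℤ_{≥0}^s with |i| < m, the Hasse derivative Q^{[i]}(X, R_1,...,R_s) is divisible by the product over all r with m_r > |i| of (X - x_r)^{m_r - |i|}. -/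
/-- The shifted polynomial `Q(X + x, Y_1 + y_1, ..., Y_s + y_s)`. -/
noncomputable def shiftPoint {K : Type*} [Field K] {s : ℕ} (x : K) (y : Fin s → K)
    (Q : MvPolynomial (Fin s) (Polynomial K)) : MvPolynomial (Fin s) (Polynomial K) :=
  MvPolynomial.eval₂
    ((MvPolynomial.C).comp (Polynomial.aeval (Polynomial.X + Polynomial.C x)).toRingHom)
    (fun k => MvPolynomial.X k + MvPolynomial.C (Polynomial.C (y k))) Q

/-- `(x, y)` is a zero of `Q` of multiplicity at least `m`. -/
def VanishesAt {K : Type*} [Field K] {s : ℕ} (Q : MvPolynomial (Fin s) (Polynomial K))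
    (x : K) (y : Fin s → K) (m : ℕ) : Prop :=
  ∀ (j : Fin s →₀ ℕ) (h : ℕ), h + (j.sum fun _ e => e) < m →
    Polynomial.coeff (MvPolynomial.coeff j (shiftPoint x y Q)) h = 0


/-!
By Taylor's formula in the variables `Y`, the coefficient of `Y^i` in `Q(X, Y + T)` is
`Q^{[i]}(X, T)`. Vanishing to order `m_r` at `(x_r, y_r)` says that `Q(X, Y + y_r)` lies in the
ideal `(X - x_r, Y_1, …, Y_s) ^ m_r`. This ideal is stable under translating `Y` by multiples of
`X - x_r`, and `R ≡ y_r` modulo `X - x_r`, so we may translate by `R` instead; Taylor's formula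
then turns the condition into `(X - x_r) ^ (m_r - |i|) ∣ Q^{[i]}(X, R)` for every `i`. The factors
belonging to distinct `x_r` are coprime, so these divisibilities combine into divisibility by
their product.
-/

open MvPolynomial

namespace Finsupp

variable {σ : Type*} {u i : σ →₀ ℕ} {k : σ}

theorem add_single_one_tsub_of_le (h : i k ≤ u k) : u + single k 1 - i = u - i + single k 1 := by
  ext t
  by_cases htk : t = k
  · subst htk; simp; omega
  · simp [htk]

theorem add_single_one_tsub_of_ne_zero (h : i k ≠ 0) :
    u + single k 1 - i = u - (i - single k 1) := by
  ext t
  by_cases htk : t = k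
  · subst htk; simp; omega
  · simp [htk]

/-- Pascal's rule for the coefficients of the Hasse derivatives of a monomial. -/
theorem prod_choose_add_single_one [DecidableEq σ] (hk : k ∈ i.support) :
    ∏ t ∈ i.support, ((u + single k 1 : σ →₀ ℕ) t).choose (i t) =
      ∏ t ∈ i.support, (u t).choose (i t) +
        ∏ t ∈ (i - single k 1).support, (u t).choose ((i - single k 1 : σ →₀ ℕ) t) := by
  set i' := i - single k 1
  have hi'k : i k = i' k + 1 := by
    have := mem_support_iff.1 hk
    simp [i']; omega
  have hi't : ∀ t ≠ k, i' t = i t := fun t ht => by simp [i', ht.symm]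
  rw [Finset.prod_subset (f := fun t => (u t).choose (i' t)) support_tsub
    (fun t _ ht => by rw [notMem_support_iff.1 ht, Nat.choose_zero_right]),
    ← Finset.mul_prod_erase _ _ hk, ← Finset.mul_prod_erase _ _ hk,
    ← Finset.mul_prod_erase _ _ hk]
  have hrest : ∀ t ∈ i.support.erase k, ((u + single k 1 : σ →₀ ℕ) t).choose (i t) =
      (u t).choose (i t) ∧ (u t).choose (i' t) = (u t).choose (i t) := by
    intro t ht
    have htk := Finset.ne_of_mem_erase ht
    simp [htk.symm, hi't t htk]
  rw [Finset.prod_congr rfl fun t ht => (hrest t ht).1,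
    Finset.prod_congr rfl fun t ht => (hrest t ht).2, add_apply, single_eq_same, hi'k,
    Nat.choose_succ_succ']
  ring

end Finsupp

section HasseDerivative

variable {A σ : Type*} [CommSemiring A]

theorem mvHasseDeriv_monomial (i u : σ →₀ ℕ) (c : A) :
    mvHasseDeriv i (monomial u c) =
      (∏ t ∈ i.support, (u t).choose (i t)) • monomial (u - i) c := by
  refine (sum_monomial_eq (by split_ifs <;> simp)).trans ?_
  split_ifs with hiu
  · rfl
  · obtain ⟨t, ht⟩ : ∃ t, u t < i t := by simpa [Finsupp.le_def] using hiu
    rw [Finset.prod_eq_zero (f := fun k => (u k).choose (i k))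
      (Finsupp.mem_support_iff.2 (by omega)) (Nat.choose_eq_zero_of_lt ht), zero_smul]

theorem mvHasseDeriv_add (i : σ →₀ ℕ) (P Q : MvPolynomial σ A) :
    mvHasseDeriv i (P + Q) = mvHasseDeriv i P + mvHasseDeriv i Q := by
  unfold mvHasseDeriv
  rw [AddMonoidAlgebra.coeff_add]
  apply Finsupp.sum_add_index'
  · intro j; split_ifs <;> simp
  · intro j c d; split_ifs <;> simp [smul_add]

theorem mvHasseDeriv_C [DecidableEq σ] (i : σ →₀ ℕ) (a : A) :
    mvHasseDeriv i (C a) = if i = 0 then C a else 0 := by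
  rw [← monomial_zero', mvHasseDeriv_monomial]
  split_ifs with hi
  · simp [hi]
  · obtain ⟨t, ht⟩ := Finsupp.support_nonempty_iff.2 hi
    rw [Finset.prod_eq_zero ht (Nat.choose_eq_zero_of_lt (Nat.pos_of_ne_zero
      (Finsupp.mem_support_iff.1 ht))), zero_smul]

theorem mvHasseDeriv_mul_X [DecidableEq σ] (i : σ →₀ ℕ) (k : σ) (P : MvPolynomial σ A) :
    mvHasseDeriv i (P * X k) = mvHasseDeriv i P * X k +
      if k ∈ i.support then mvHasseDeriv (i - Finsupp.single k 1) P else 0 := by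
  induction P using MvPolynomial.induction_on' with
  | add p q hp hq =>
    rw [add_mul, mvHasseDeriv_add, hp, hq, mvHasseDeriv_add, add_mul]
    split_ifs
    · rw [mvHasseDeriv_add]; ring
    · ring
  | monomial u c =>
    have hX : ∀ v : σ →₀ ℕ, monomial v c * X k = monomial (v + Finsupp.single k 1) c :=
      fun v => by rw [X, monomial_mul, mul_one]
    rw [hX, mvHasseDeriv_monomial, mvHasseDeriv_monomial, smul_mul_assoc, hX]
    split_ifs with hk
    · have hik : i k ≠ 0 := Finsupp.mem_support_iff.1 hk
      rw [mvHasseDeriv_monomial, Finsupp.prod_choose_add_single_one hk, add_smul,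
        Finsupp.add_single_one_tsub_of_ne_zero hik]
      congr 1
      by_cases hle : i k ≤ u k
      · rw [← Finsupp.add_single_one_tsub_of_ne_zero hik, Finsupp.add_single_one_tsub_of_le hle]
      · rw [Finset.prod_eq_zero (f := fun t => (u t).choose (i t)) hk
          (Nat.choose_eq_zero_of_lt (not_le.1 hle)), zero_smul, zero_smul]
    · have hik : i k = 0 := Finsupp.notMem_support_iff.1 hk
      rw [add_zero, Finsupp.add_single_one_tsub_of_le (by omega), Finset.prod_congr rfl
        fun t ht => by
          rw [Finsupp.add_apply, Finsupp.single_eq_of_ne (ne_of_mem_of_not_mem ht hk), add_zero]]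

end HasseDerivative

section Shift

variable {A σ : Type*} [CommSemiring A]

noncomputable def shiftVars (T : σ → A) : MvPolynomial σ A →ₐ[A] MvPolynomial σ A :=
  aeval fun k => X k + C (T k)

theorem shiftVars_X (T : σ → A) (k : σ) : shiftVars T (X k) = X k + C (T k) :=
  aeval_X _ _

theorem shiftVars_C (T : σ → A) (a : A) : shiftVars T (C a) = C a :=
  aeval_C _ _

theorem shiftVars_shiftVars (T U : σ → A) (P : MvPolynomial σ A) :
    shiftVars T (shiftVars U P) = shiftVars (T + U) P := by
  rw [← AlgHom.comp_apply]
  congr 1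
  refine MvPolynomial.algHom_ext fun k => ?_
  rw [AlgHom.comp_apply, shiftVars_X, map_add, shiftVars_X, shiftVars_C, shiftVars_X,
    Pi.add_apply, C_add, add_assoc]

/-- Taylor's formula. -/
theorem coeff_shiftVars (T : σ → A) (P : MvPolynomial σ A) (i : σ →₀ ℕ) :
    coeff i (shiftVars T P) = eval T (mvHasseDeriv i P) := by
  classical
  induction P using MvPolynomial.induction_on generalizing i with
  | C a =>
    rw [shiftVars_C, coeff_C, mvHasseDeriv_C]
    rcases eq_or_ne i 0 with rfl | hi
    · simp
    · simp [hi, hi.symm]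
  | add p q hp hq => rw [map_add, coeff_add, mvHasseDeriv_add, map_add, hp, hq]
  | mul_X p k hp =>
    rw [map_mul, shiftVars_X, mul_add, coeff_add, coeff_mul_X', mul_comm _ (C _), coeff_C_mul,
      mvHasseDeriv_mul_X, map_add, eval_mul, eval_X]
    simp only [hp]
    split_ifs
    · ring
    · rw [map_zero]; ring

end Shift

section Order

variable {A σ : Type*} [CommSemiring A]

/-- `P` lies in the ideal `(C π, X_k : k ∈ σ) ^ m`. -/
def HasOrderAtLeast (π : A) (m : ℕ) (P : MvPolynomial σ A) : Prop :=
  ∀ j : σ →₀ ℕ, π ^ (m - j.degree) ∣ coeff j P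

theorem pow_degree_dvd_prod {π : A} {T : σ → A} (hT : ∀ k, π ∣ T k) (d : σ →₀ ℕ) :
    π ^ d.degree ∣ d.prod fun k e => T k ^ e := by
  rw [Finsupp.degree_apply, ← Finset.prod_pow_eq_pow_sum]
  exact Finset.prod_dvd_prod_of_dvd _ _ fun k _ => pow_dvd_pow_of_dvd (hT k) _

theorem hasOrderAtLeast_shiftVars {π : A} {m : ℕ} {T : σ → A} {P : MvPolynomial σ A}
    (hT : ∀ k, π ∣ T k) (hP : HasOrderAtLeast π m P) :
    HasOrderAtLeast π m (shiftVars T P) := by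
  intro i
  rw [P.as_sum, map_sum, coeff_sum]
  refine Finset.dvd_sum fun j _ => ?_
  rw [coeff_shiftVars, mvHasseDeriv_monomial, map_nsmul, eval_monomial, nsmul_eq_mul]
  have hdeg : j.degree ≤ (j - i).degree + i.degree := by
    rw [← map_add]
    exact Finsupp.degree_mono le_tsub_add
  calc π ^ (m - i.degree) ∣ π ^ (m - j.degree) * π ^ (j - i).degree := by
        rw [← pow_add]
        exact pow_dvd_pow _ (by omega)
    _ ∣ coeff j P * (j - i).prod fun k e => T k ^ e :=
        mul_dvd_mul (hP j) (pow_degree_dvd_prod hT _)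
    _ ∣ _ := dvd_mul_left _ _

end Order

theorem hasOrderAtLeast_shiftVars_iff {A σ : Type*} [CommRing A] {π : A} {m : ℕ}
    {T U : σ → A} (P : MvPolynomial σ A) (hTU : ∀ k, π ∣ T k - U k) :
    HasOrderAtLeast π m (shiftVars T P) ↔ HasOrderAtLeast π m (shiftVars U P) := by
  have key : ∀ T U : σ → A, (∀ k, π ∣ T k - U k) →
      HasOrderAtLeast π m (shiftVars U P) → HasOrderAtLeast π m (shiftVars T P) := by
    intro T U hTU hU
    rw [← sub_add_cancel T U, ← shiftVars_shiftVars]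
    exact hasOrderAtLeast_shiftVars hTU hU
  exact ⟨key U T fun k => dvd_sub_comm.1 (hTU k), key T U hTU⟩

theorem hasOrderAtLeast_X_map_aeval_iff {R σ : Type*} [CommRing R] (a : R) (m : ℕ)
    (P : MvPolynomial σ (Polynomial R)) :
    HasOrderAtLeast Polynomial.X m
        (map (Polynomial.aeval (Polynomial.X + Polynomial.C a)).toRingHom P) ↔
      HasOrderAtLeast (Polynomial.X - Polynomial.C a) m P := by
  refine forall_congr' fun j => ?_
  rw [coeff_map, Polynomial.X_sub_C_pow_dvd_iff]
  rfl

section Point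

variable {K : Type*} [Field K] {s : ℕ}

theorem shiftPoint_eq_map_shiftVars (a : K) (y : Fin s → K)
    (Q : MvPolynomial (Fin s) (Polynomial K)) :
    shiftPoint a y Q = map (Polynomial.aeval (Polynomial.X + Polynomial.C a)).toRingHom
      (shiftVars (fun k => Polynomial.C (y k)) Q) := by
  rw [shiftVars, aeval_def, algebraMap_eq, eval₂_comp_left, map_comp_C]
  unfold shiftPoint
  congr 1
  funext k
  simp

theorem vanishesAt_iff_hasOrderAtLeast (Q : MvPolynomial (Fin s) (Polynomial K)) (a : K)
    (y : Fin s → K) (m : ℕ) :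
    VanishesAt Q a y m ↔ HasOrderAtLeast (Polynomial.X - Polynomial.C a) m
      (shiftVars (fun k => Polynomial.C (y k)) Q) := by
  rw [← hasOrderAtLeast_X_map_aeval_iff, ← shiftPoint_eq_map_shiftVars]
  refine forall_congr' fun j => ?_
  rw [Polynomial.X_pow_dvd_iff, show (j.sum fun _ e => e) = j.degree from rfl]
  exact ⟨fun h d hd => h d (by omega), fun h d hd => h d (by omega)⟩

theorem vanishesAt_iff_forall_dvd {Q : MvPolynomial (Fin s) (Polynomial K)} {a : K}
    {y : Fin s → K} {m : ℕ} {R : Fin s → Polynomial K} (hR : ∀ k, (R k).eval a = y k) :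
    VanishesAt Q a y m ↔ ∀ i : Fin s →₀ ℕ,
      (Polynomial.X - Polynomial.C a) ^ (m - i.degree) ∣ eval R (mvHasseDeriv i Q) := by
  rw [vanishesAt_iff_hasOrderAtLeast, hasOrderAtLeast_shiftVars_iff Q (U := R) fun k => ?_]
  · simp only [HasOrderAtLeast, coeff_shiftVars]
  · rw [← hR k]
    exact dvd_sub_comm.1 Polynomial.X_sub_C_dvd_sub_C_eval

end Point

theorem vanishing_iff_simultaneous_divisibility_general {K : Type*} [Field K] {s n : ℕ}
    (x : Fin n → K) (hx : Function.Injective x)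
    (mm : Fin n → ℕ)
    (y : Fin n → Fin s → K) (R : Fin s → Polynomial K)
    (hR : ∀ i j, Polynomial.eval (x i) (R j) = y i j)
    (Q : MvPolynomial (Fin s) (Polynomial K)) :
    (∀ i : Fin n, VanishesAt Q (x i) (y i) (mm i)) ↔
      ∀ i : Fin s →₀ ℕ, (i.sum fun _ e => e) < Finset.univ.sup mm →
        (∏ r ∈ Finset.univ.filter (fun r => (i.sum fun _ e => e) < mm r),
            (Polynomial.X - Polynomial.C (x r)) ^ (mm r - (i.sum fun _ e => e))) ∣
          MvPolynomial.eval R (mvHasseDeriv i Q) := by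
  simp only [vanishesAt_iff_forall_dvd (hR _),
    show ∀ i : Fin s →₀ ℕ, (i.sum fun _ e => e) = i.degree from fun _ => rfl]
  constructor
  · intro hdvd i _
    refine Finset.prod_dvd_of_coprime (fun r _ r' _ hrr' => ?_) fun r _ => hdvd r i
    exact (Polynomial.pairwise_coprime_X_sub_C hx hrr').pow
  · intro hdvd r i
    by_cases hir : i.degree < mm r
    · have hmem : r ∈ Finset.univ.filter (fun r => i.degree < mm r) := by simpa using hir
      exact (Finset.dvd_prod_of_mem
        (fun r => (Polynomial.X - Polynomial.C (x r)) ^ (mm r - i.degree)) hmem).trans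
          (hdvd i (hir.trans_le (Finset.le_sup (Finset.mem_univ r))))
    · rw [Nat.sub_eq_zero_of_le (not_lt.1 hir), pow_zero]
      exact one_dvd _

/-- `Q` vanishes at each point `(x_i, y_{i,1},...,y_{i,s})` with multiplicity at
least `m_i` iff for every multi-index `i` with `|i| < max_r m_r`, the Hasse
derivative `Q^{[i]}(X, R_1,...,R_s)` is divisible by
`Π_{r : m_r > |i|} (X - x_r)^{m_r - |i|}`. -/
theorem vanishing_iff_simultaneous_divisibility {K : Type*} [Field K] {s n : ℕ}
    (x : Fin n → K) (hx : Function.Injective x)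
    (mm : Fin n → ℕ) (hmm : ∀ i, 0 < mm i)
    (y : Fin n → Fin s → K) (R : Fin s → Polynomial K)
    (hR : ∀ i j, Polynomial.eval (x i) (R j) = y i j)
    (Q : MvPolynomial (Fin s) (Polynomial K)) :
    (∀ i : Fin n, VanishesAt Q (x i) (y i) (mm i)) ↔
      ∀ i : Fin s →₀ ℕ, (i.sum fun _ e => e) < Finset.univ.sup mm →
        (∏ r ∈ Finset.univ.filter (fun r => (i.sum fun _ e => e) < mm r),
            (Polynomial.X - Polynomial.C (x r)) ^ (mm r - (i.sum fun _ e => e))) ∣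
          MvPolynomial.eval R (mvHasseDeriv i Q) :=
  vanishing_iff_simultaneous_divisibility_general x hx mm y R hR Q
end
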